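/- The misère monoid of the set of normal-play canonical-form integers is isomorphic to (Z, +): the map sending the game n to the integer n is an isomorphism of the quotient monoid under misère equivalence modulo integers, with outcome partition N^- = {0}, L^- = negative integers, R^- = positive integers, and total ordering n ≧ m (mod integers) iff n ≤ m as integers. -/

import Mathlib

universe u

namespace SetTheory

/-- Ported verbatim (in substance) from Mathlib (Dec 2024), `Mathlib/SetTheory/Game/PGame.lean`,
which has since been removed from Mathlib. -/
inductive PGame : Type (u + 1)
  | mk : ∀ α β : Type u, (α → PGame) → (β → PGame) → PGame

namespace PGame

def LeftMoves : PGame → Type u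
  | mk l _ _ _ => l

def RightMoves : PGame → Type u
  | mk _ r _ _ => r

def moveLeft : ∀ g : PGame, LeftMoves g → PGame
  | mk _l _ L _ => L

def moveRight : ∀ g : PGame, RightMoves g → PGame
  | mk _ _r _ R => R

inductive IsOption : PGame → PGame → Prop
  | moveLeft {x : PGame} (i : x.LeftMoves) : IsOption (x.moveLeft i) x
  | moveRight {x : PGame} (i : x.RightMoves) : IsOption (x.moveRight i) x

instance : Zero PGame :=
  ⟨⟨PEmpty, PEmpty, PEmpty.elim, PEmpty.elim⟩⟩

def neg : PGame → PGame
  | ⟨l, r, L, R⟩ => ⟨r, l, fun i => neg (R i), fun i => neg (L i)⟩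

instance : Neg PGame :=
  ⟨neg⟩

noncomputable instance : Add PGame.{u} :=
  ⟨fun x y => by
    induction x generalizing y with | mk xl xr _ _ IHxl IHxr => _
    induction y with | mk yl yr yL yR IHyl IHyr => _
    have y := mk yl yr yL yR
    refine ⟨xl ⊕ yl, xr ⊕ yr, Sum.rec ?_ ?_, Sum.rec ?_ ?_⟩
    · exact fun i => IHxl i y
    · exact IHyl
    · exact fun i => IHxr i y
    · exact IHyr⟩

end PGame

end SetTheory


open SetTheory

namespace Misere

/-- `F` is a follower of `G`: reachable from `G` by a (possibly empty) sequence of moves. -/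
def Follower (F G : PGame) : Prop := Relation.ReflTransGen PGame.IsOption F G

def IsLeftEnd (G : PGame) : Prop := IsEmpty G.LeftMoves
def IsRightEnd (G : PGame) : Prop := IsEmpty G.RightMoves

/-- A dead left end: every follower (including itself) is a left end. -/
def DeadLeftEnd (G : PGame) : Prop := ∀ F, Follower F G → IsLeftEnd F
def DeadRightEnd (G : PGame) : Prop := ∀ F, Follower F G → IsRightEnd F
def DeadEnd (G : PGame) : Prop := DeadLeftEnd G ∨ DeadRightEnd G

/-- A game is dead-ending if every end follower is a dead end. -/
def DeadEnding (G : PGame) : Prop :=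
  ∀ F, Follower F G → (IsLeftEnd F → DeadLeftEnd F) ∧ (IsRightEnd F → DeadRightEnd F)

/-- The universe of dead-ending games. -/
def E : Set PGame := {G | DeadEnding G}

/-- `(misereWins G).1` : Left, moving first, wins `G` under misère play;
    `(misereWins G).2` : Right, moving first, wins `G` under misère play. -/
def misereWins : PGame → Prop × Prop
  | PGame.mk l r L R =>
      (IsEmpty l ∨ ∃ i, ¬ (misereWins (L i)).2,
       IsEmpty r ∨ ∃ j, ¬ (misereWins (R j)).1)

def LeftWinsGF (G : PGame) : Prop := (misereWins G).1
def RightWinsGF (G : PGame) : Prop := (misereWins G).2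

inductive MOutcome : Type
  | L | N | P | R
deriving DecidableEq

/-- Partial order on misère outcomes: `R` minimal, `L` maximal, `N` and `P` incomparable. -/
def MOutcome.le : MOutcome → MOutcome → Prop
  | .R, _ => True
  | _, .L => True
  | a, b => a = b

instance : LE MOutcome := ⟨MOutcome.le⟩

/-- The misère outcome of a game. -/
noncomputable def outcome (G : PGame) : MOutcome := by
  classical
  exact if LeftWinsGF G then (if RightWinsGF G then .N else .L)
        else (if RightWinsGF G then .R else .P)

/-- `G ≡ H (mod U)`. -/
def equivMod (U : Set PGame) (G H : PGame) : Prop :=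
  ∀ X ∈ U, outcome (G + X) = outcome (H + X)

/-- `G ≧ H (mod U)`. -/
def geMod (U : Set PGame) (G H : PGame) : Prop :=
  ∀ X ∈ U, outcome (H + X) ≤ outcome (G + X)

/-- `LeftChain G n`: there is a sequence of `n` consecutive Left moves from `G`
ending at the zero position. -/
inductive LeftChain : PGame → ℕ → Prop
  | zero (G : PGame) : IsLeftEnd G → IsRightEnd G → LeftChain G 0
  | succ (G : PGame) (i : G.LeftMoves) (n : ℕ) :
      LeftChain (G.moveLeft i) n → LeftChain G (n + 1)

inductive RightChain : PGame → ℕ → Prop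
  | zero (G : PGame) : IsLeftEnd G → IsRightEnd G → RightChain G 0
  | succ (G : PGame) (j : G.RightMoves) (n : ℕ) :
      RightChain (G.moveRight j) n → RightChain G (n + 1)

/-- Left-length: minimum number of consecutive Left moves needed to reach zero. -/
noncomputable def leftLength (G : PGame) : ℕ := sInf {n | LeftChain G n}

/-- Right-length: minimum number of consecutive Right moves needed to reach zero. -/
noncomputable def rightLength (G : PGame) : ℕ := sInf {n | RightChain G n}

/-- Normal-play canonical form of a nonnegative integer. -/
def natGame : ℕ → PGame
  | 0 => 0
  | n + 1 => PGame.mk PUnit PEmpty (fun _ => natGame n) PEmpty.elim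

/-- Normal-play canonical form of an integer (negatives are conjugates). -/
def intGame (n : ℤ) : PGame :=
  if 0 ≤ n then natGame n.toNat else -natGame (-n).toNat

/-- Normal-play canonical form of the dyadic rational `m / 2 ^ j`. -/
def dyadicGame : ℤ → ℕ → PGame
  | m, 0 => intGame m
  | m, j + 1 =>
      if m % 2 = 0 then dyadicGame (m / 2) j
      else PGame.mk PUnit PUnit (fun _ => dyadicGame ((m - 1) / 2) j)
            (fun _ => dyadicGame ((m + 1) / 2) j)

/-- The closure of dead ends: finite disjunctive sums of dead ends. -/
def DeadEndClosure : Set PGame :=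
  {G | ∃ l : List PGame, (∀ x ∈ l, DeadEnd x) ∧ G = l.sum}

end Misere

open Misere SetTheory PGame

/-- The universe of normal-play canonical-form integer games. -/
def IntUniv : Set PGame := {G | ∃ n : ℤ, G = intGame n}

/-!
In a sum of integer games the two players never interact: however play goes, Left has
exactly `p` moves and Right exactly `q` moves available (`IsRace G p q`), and these
counts add under disjunctive sum. Under misère play the player who runs out of moves first
wins, so the outcome of such a game depends only on the sign of `p - q`, which for
`n + X` is the sign of the integer `n + X`. Comparing `n` and `m` against the test game
`X = -n` then separates every pair of distinct integers.
-/

namespace SetTheory.PGame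

theorem leftMoves_add : ∀ x y : PGame.{u}, (x + y).LeftMoves = (x.LeftMoves ⊕ y.LeftMoves)
  | ⟨_, _, _, _⟩, ⟨_, _, _, _⟩ => rfl

theorem rightMoves_add : ∀ x y : PGame.{u}, (x + y).RightMoves = (x.RightMoves ⊕ y.RightMoves)
  | ⟨_, _, _, _⟩, ⟨_, _, _, _⟩ => rfl

def toLeftMovesAdd {x y : PGame} : x.LeftMoves ⊕ y.LeftMoves ≃ (x + y).LeftMoves :=
  Equiv.cast (leftMoves_add x y).symm

def toRightMovesAdd {x y : PGame} : x.RightMoves ⊕ y.RightMoves ≃ (x + y).RightMoves :=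
  Equiv.cast (rightMoves_add x y).symm

theorem add_moveLeft_inl {x : PGame} (y : PGame) (i) :
    (x + y).moveLeft (toLeftMovesAdd (Sum.inl i)) = x.moveLeft i + y := by
  cases x; cases y; rfl

theorem add_moveLeft_inr (x : PGame) {y : PGame} (i) :
    (x + y).moveLeft (toLeftMovesAdd (Sum.inr i)) = x + y.moveLeft i := by
  cases x; cases y; rfl

theorem add_moveRight_inl {x : PGame} (y : PGame) (i) :
    (x + y).moveRight (toRightMovesAdd (Sum.inl i)) = x.moveRight i + y := by
  cases x; cases y; rfl

theorem add_moveRight_inr (x : PGame) {y : PGame} (i) :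
    (x + y).moveRight (toRightMovesAdd (Sum.inr i)) = x + y.moveRight i := by
  cases x; cases y; rfl

@[elab_as_elim]
theorem leftMoves_add_cases {x y : PGame} (k) {P : (x + y).LeftMoves → Prop}
    (hl : ∀ i, P <| toLeftMovesAdd (Sum.inl i)) (hr : ∀ i, P <| toLeftMovesAdd (Sum.inr i)) :
    P k :=
  toLeftMovesAdd.apply_symm_apply k ▸ Sum.rec hl hr (toLeftMovesAdd.symm k)

@[elab_as_elim]
theorem rightMoves_add_cases {x y : PGame} (k) {P : (x + y).RightMoves → Prop}
    (hl : ∀ i, P <| toRightMovesAdd (Sum.inl i)) (hr : ∀ i, P <| toRightMovesAdd (Sum.inr i)) :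
    P k :=
  toRightMovesAdd.apply_symm_apply k ▸ Sum.rec hl hr (toRightMovesAdd.symm k)

end SetTheory.PGame

namespace Misere

lemma leftWinsGF_iff (G : PGame) :
    LeftWinsGF G ↔ IsEmpty G.LeftMoves ∨ ∃ i, ¬RightWinsGF (G.moveLeft i) := by
  cases G; rfl

lemma rightWinsGF_iff (G : PGame) :
    RightWinsGF G ↔ IsEmpty G.RightMoves ∨ ∃ j, ¬LeftWinsGF (G.moveRight j) := by
  cases G; rfl

theorem MOutcome.le_refl (a : MOutcome) : a ≤ a := by
  cases a <;> trivial

theorem equivMod.symm {U : Set PGame} {G H : PGame} (h : equivMod U G H) : equivMod U H G :=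
  fun X hX => (h X hX).symm

theorem equivMod.geMod {U : Set PGame} {G H : PGame} (h : equivMod U G H) : geMod U G H :=
  fun X hX => h X hX ▸ MOutcome.le_refl _

def signOutcome (d : ℤ) : MOutcome :=
  if d < 0 then .L else if 0 < d then .R else .N

theorem signOutcome_antitone {d e : ℤ} (h : d ≤ e) : signOutcome e ≤ signOutcome d := by
  unfold signOutcome
  split_ifs <;> first | omega | trivial

theorem signOutcome_le_signOutcome_zero_iff {d : ℤ} :
    signOutcome d ≤ signOutcome 0 ↔ 0 ≤ d := by
  refine ⟨fun h => ?_, signOutcome_antitone⟩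
  by_contra hd
  simp only [signOutcome, if_pos (not_le.1 hd)] at h
  exact MOutcome.noConfusion h

/-- `IsRace G p q`: however play proceeds, Left has exactly `p` moves and Right exactly `q`
moves left in `G`, each move using up one of the mover's own. -/
inductive IsRace : PGame → ℕ → ℕ → Prop
  | mk (G : PGame) (p q : ℕ)
      (isEmpty_left : IsEmpty G.LeftMoves ↔ p = 0)
      (isEmpty_right : IsEmpty G.RightMoves ↔ q = 0)
      (moveLeft : ∀ i, IsRace (G.moveLeft i) (p - 1) q)
      (moveRight : ∀ j, IsRace (G.moveRight j) p (q - 1)) : IsRace G p q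

namespace IsRace

theorem winsGF_iff {G : PGame} {p q : ℕ} (h : IsRace G p q) :
    (LeftWinsGF G ↔ p ≤ q) ∧ (RightWinsGF G ↔ q ≤ p) := by
  induction h with
  | mk G p q hL hR _ _ ihl ihr =>
    constructor
    · simp only [leftWinsGF_iff, fun i => (ihl i).2, exists_const_iff, ← not_isEmpty_iff, hL]
      omega
    · simp only [rightWinsGF_iff, fun j => (ihr j).1, exists_const_iff, ← not_isEmpty_iff, hR]
      omega

theorem outcome {G : PGame} {p q : ℕ} (h : IsRace G p q) :
    outcome G = signOutcome (p - q) := by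
  obtain ⟨hLeft, hRight⟩ := h.winsGF_iff
  unfold Misere.outcome signOutcome
  split_ifs <;> simp_all <;> omega

theorem add {G : PGame} {p q : ℕ} (hG : IsRace G p q) {H : PGame} {p' q' : ℕ}
    (hH : IsRace H p' q') : IsRace (G + H) (p + p') (q + q') := by
  induction hG generalizing H p' q' with
  | mk G p q hL hR _ _ ihl ihr =>
    induction hH with
    | mk H p' q' hL' hR' hml' hmr' ihl' ihr' =>
      have hH := IsRace.mk H p' q' hL' hR' hml' hmr'
      refine .mk _ _ _ ?_ ?_ (fun k => ?_) (fun k => ?_)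
      · rw [leftMoves_add, isEmpty_sum, hL, hL']
        omega
      · rw [rightMoves_add, isEmpty_sum, hR, hR']
        omega
      · induction k using leftMoves_add_cases with
        | hl i =>
          have : p ≠ 0 := fun h => (hL.2 h).false i
          rw [add_moveLeft_inl]
          convert ihl i hH using 1
          omega
        | hr i =>
          have : p' ≠ 0 := fun h => (hL'.2 h).false i
          rw [add_moveLeft_inr]
          convert ihl' i using 1
          omega
      · induction k using rightMoves_add_cases with
        | hl j =>
          have : q ≠ 0 := fun h => (hR.2 h).false j
          rw [add_moveRight_inl]
          convert ihr j hH using 1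
          omega
        | hr j =>
          have : q' ≠ 0 := fun h => (hR'.2 h).false j
          rw [add_moveRight_inr]
          convert ihr' j using 1
          omega

end IsRace

theorem isRace_natGame : ∀ n : ℕ, IsRace (natGame n) n 0
  | 0 => .mk _ _ _ (iff_of_true ⟨nofun⟩ rfl) (iff_of_true ⟨nofun⟩ rfl) nofun nofun
  | n + 1 => .mk _ _ _ (iff_of_false (fun h => h.false PUnit.unit) n.succ_ne_zero)
      (iff_of_true ⟨nofun⟩ rfl) (fun _ => isRace_natGame n) nofun

theorem isRace_neg_natGame : ∀ n : ℕ, IsRace (-natGame n) 0 n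
  | 0 => .mk _ _ _ (iff_of_true ⟨nofun⟩ rfl) (iff_of_true ⟨nofun⟩ rfl) nofun nofun
  | n + 1 => .mk _ _ _ (iff_of_true ⟨nofun⟩ rfl)
      (iff_of_false (fun h => h.false PUnit.unit) n.succ_ne_zero) nofun
      (fun _ => isRace_neg_natGame n)

theorem isRace_intGame (n : ℤ) : IsRace (intGame n) n.toNat (-n).toNat := by
  unfold intGame
  split_ifs with hn
  · simpa [show (-n).toNat = 0 by omega] using isRace_natGame n.toNat
  · simpa [show n.toNat = 0 by omega] using isRace_neg_natGame (-n).toNat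

theorem outcome_intGame (n : ℤ) : outcome (intGame n) = signOutcome n := by
  rw [(isRace_intGame n).outcome, Int.toNat_sub_toNat_neg]

theorem outcome_intGame_add (n m : ℤ) :
    outcome (intGame n + intGame m) = signOutcome (n + m) := by
  rw [((isRace_intGame n).add (isRace_intGame m)).outcome]
  congr 1
  omega

theorem equivMod_intGame_add (n m : ℤ) :
    equivMod IntUniv (intGame n + intGame m) (intGame (n + m)) := by
  rintro _ ⟨k, rfl⟩
  rw [(((isRace_intGame n).add (isRace_intGame m)).add (isRace_intGame k)).outcome,
    outcome_intGame_add]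
  congr 1
  omega

theorem geMod_intGame_iff (n m : ℤ) : geMod IntUniv (intGame n) (intGame m) ↔ n ≤ m := by
  constructor
  · intro h
    have h' := h _ ⟨-n, rfl⟩
    rw [outcome_intGame_add, outcome_intGame_add, add_neg_cancel,
      signOutcome_le_signOutcome_zero_iff] at h'
    omega
  · rintro hnm _ ⟨k, rfl⟩
    rw [outcome_intGame_add, outcome_intGame_add]
    exact signOutcome_antitone (by omega)

theorem equivMod_intGame_iff (n m : ℤ) : equivMod IntUniv (intGame n) (intGame m) ↔ n = m := by
  refine ⟨fun h => le_antisymm ?_ ?_, fun h => h ▸ fun _ _ => rfl⟩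
  · exact (geMod_intGame_iff n m).1 h.geMod
  · exact (geMod_intGame_iff m n).1 h.symm.geMod

end Misere

/-- the misère monoid of canonical-form integers is isomorphic to (ℤ, +),
with the stated outcome partition and total ordering. -/
theorem stmt10 :
    (∀ n m : ℤ, equivMod IntUniv (intGame n) (intGame m) ↔ n = m) ∧
    (∀ n m : ℤ, equivMod IntUniv (intGame n + intGame m) (intGame (n + m))) ∧
    (outcome (intGame 0) = MOutcome.N) ∧
    (∀ n : ℤ, n < 0 → outcome (intGame n) = MOutcome.L) ∧
    (∀ n : ℤ, 0 < n → outcome (intGame n) = MOutcome.R) ∧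
    (∀ n m : ℤ, geMod IntUniv (intGame n) (intGame m) ↔ n ≤ m) := by
  refine ⟨equivMod_intGame_iff, equivMod_intGame_add, ?_, fun n hn => ?_, fun n hn => ?_,
    geMod_intGame_iff⟩
  · rw [outcome_intGame]; rfl
  · rw [outcome_intGame, signOutcome, if_pos hn]
  · rw [outcome_intGame, signOutcome, if_neg hn.not_gt, if_pos hn]
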